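/- arXiv:math/0612783 — 5 statements merged into one kernel-verified Lean document; each statement's English description precedes it below -/
import Mathlib

section
/- In a randomized experiment, the observed mean outcome among treated survivors is a mixture over the principal strata LL and LD: if 0 < P(Z = T), Z is independent of (S_T, S_C, Y_T), Y_T is integrable, and P(LL) + P(LD) > 0, then E[Y^obs | Z = T, S^obs = L] = (P(LL)·E[Y_T | LL] + P(LD)·E[Y_T | LD]) / (P(LL) + P(LD)). -/
/-!
On `{Z = T, S^obs = L} = {Z = T} ∩ {S_T = L}` the observed outcome is `Y_T`, and since `Z` is
independent of `(S_T, Y_T)` the extra conditioning on `Z = T` can be dropped. What remains,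
`E[Y_T | S_T = L]`, is the law of total expectation over `{S_T = L} = LL ∪ LD`.
-/

open MeasureTheory ProbabilityTheory

section Conditioning

variable {Ω : Type*} [MeasurableSpace Ω] {μ : Measure Ω} {s t : Set Ω} {f : Ω → ℝ}

lemma integral_cond_eq_inv_mul_setIntegral :
    ∫ ω, f ω ∂μ[|s] = (μ.real s)⁻¹ * ∫ ω in s, f ω ∂μ := by
  rw [ProbabilityTheory.cond, integral_smul_measure, ENNReal.toReal_inv, smul_eq_mul,
    measureReal_def]

lemma measureReal_mul_integral_cond [IsFiniteMeasure μ] :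
    μ.real s * ∫ ω, f ω ∂μ[|s] = ∫ ω in s, f ω ∂μ := by
  rw [integral_cond_eq_inv_mul_setIntegral]
  rcases eq_or_ne (μ.real s) 0 with hs | hs
  · simp [hs, Measure.restrict_eq_zero.mpr ((measureReal_eq_zero_iff).mp hs)]
  · rw [mul_inv_cancel_left₀ hs]

lemma integral_cond_union_eq_div [IsFiniteMeasure μ] (hst : Disjoint s t) (ht : MeasurableSet t)
    (hf : IntegrableOn f (s ∪ t) μ) :
    ∫ ω, f ω ∂μ[|s ∪ t] =
      (μ.real s * ∫ ω, f ω ∂μ[|s] + μ.real t * ∫ ω, f ω ∂μ[|t]) / (μ.real s + μ.real t) := by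
  rw [integral_cond_eq_inv_mul_setIntegral, measureReal_union hst ht,
    setIntegral_union hst ht hf.left_of_union hf.right_of_union,
    measureReal_mul_integral_cond, measureReal_mul_integral_cond, inv_mul_eq_div]

end Conditioning

namespace ProbabilityTheory

variable {Ω α β : Type*} [MeasurableSpace Ω] [MeasurableSpace α] [MeasurableSpace β]
  {μ : Measure Ω} {X : Ω → α} {V : Ω → β} {Y : Ω → ℝ}
  {A : Set α} {B : Set β}

lemma IndepFun.setIntegral_preimage_inter (h : IndepFun X (fun ω => (V ω, Y ω)) μ)
    (hX : Measurable X) (hV : Measurable V) (hY : Integrable Y μ)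
    (hA : MeasurableSet A) (hB : MeasurableSet B) :
    ∫ ω in X ⁻¹' A ∩ V ⁻¹' B, Y ω ∂μ = μ.real (X ⁻¹' A) * ∫ ω in V ⁻¹' B, Y ω ∂μ := by
  have hmeas_indicator : Measurable ((Prod.fst ⁻¹' B).indicator (Prod.snd : β × ℝ → ℝ)) :=
    measurable_snd.indicator (measurable_fst hB)
  calc ∫ ω in X ⁻¹' A ∩ V ⁻¹' B, Y ω ∂μ
      = ∫ ω in X ⁻¹' A, (V ⁻¹' B).indicator Y ω ∂μ := (setIntegral_indicator (hV hB)).symm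
    _ = μ.real (X ⁻¹' A) * ∫ ω, (V ⁻¹' B).indicator Y ω ∂μ :=
        Indep.setIntegral_eq_mul (f := (Prod.fst ⁻¹' B).indicator Prod.snd) hX.comap_le h
          (hV.aemeasurable.prodMk hY.aemeasurable) ⟨A, hA, rfl⟩
          hmeas_indicator.aestronglyMeasurable
    _ = μ.real (X ⁻¹' A) * ∫ ω in V ⁻¹' B, Y ω ∂μ := by rw [integral_indicator (hV hB)]

lemma IndepFun.integral_cond_preimage_inter [IsFiniteMeasure μ]
    (h : IndepFun X (fun ω => (V ω, Y ω)) μ)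
    (hX : Measurable X) (hV : Measurable V) (hY : Integrable Y μ)
    (hA : MeasurableSet A) (hB : MeasurableSet B) (hXA : μ (X ⁻¹' A) ≠ 0) :
    ∫ ω, Y ω ∂μ[|X ⁻¹' A ∩ V ⁻¹' B] = ∫ ω, Y ω ∂μ[|V ⁻¹' B] := by
  have hXV : IndepFun X V μ := h.comp measurable_id measurable_fst
  have hmeas : μ.real (X ⁻¹' A ∩ V ⁻¹' B) = μ.real (X ⁻¹' A) * μ.real (V ⁻¹' B) := by
    simp only [measureReal_def, hXV.measure_inter_preimage_eq_mul A B hA hB, ENNReal.toReal_mul]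
  have hXA' : μ.real (X ⁻¹' A) ≠ 0 := (measureReal_ne_zero_iff).mpr hXA
  rw [integral_cond_eq_inv_mul_setIntegral, integral_cond_eq_inv_mul_setIntegral, hmeas,
    h.setIntegral_preimage_inter hX hV hY hA hB, mul_inv_rev, mul_assoc,
    inv_mul_cancel_left₀ hXA']

end ProbabilityTheory

theorem treated_survivor_mean_is_mixture_general
    {Ω : Type*} [MeasurableSpace Ω] (μ : Measure Ω) [IsProbabilityMeasure μ]
    (Z S_T S_C : Ω → Bool) (Y_T Y_C : Ω → ℝ)
    (hZ : Measurable Z) (hST : Measurable S_T) (hSC : Measurable S_C)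
    (hpos : 0 < μ {ω | Z ω = true})
    (hindep : IndepFun Z (fun ω => (S_T ω, S_C ω, Y_T ω)) μ)
    (hint : Integrable Y_T μ) :
    (∫ ω, (if Z ω then Y_T ω else Y_C ω)
        ∂μ[|{ω | Z ω = true ∧ (if Z ω then S_T ω else S_C ω) = true}]) =
      ((μ {ω | S_T ω = true ∧ S_C ω = true}).toReal
          * ∫ ω, Y_T ω ∂μ[|{ω | S_T ω = true ∧ S_C ω = true}]
        + (μ {ω | S_T ω = true ∧ S_C ω = false}).toReal
          * ∫ ω, Y_T ω ∂μ[|{ω | S_T ω = true ∧ S_C ω = false}])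
      / ((μ {ω | S_T ω = true ∧ S_C ω = true}).toReal
        + (μ {ω | S_T ω = true ∧ S_C ω = false}).toReal) := by
  have htreated_survivors : {ω | Z ω = true ∧ (if Z ω then S_T ω else S_C ω) = true}
      = Z ⁻¹' {true} ∩ S_T ⁻¹' {true} := by
    ext ω; by_cases hz : Z ω = true <;> simp [hz]
  have hsurvivors : S_T ⁻¹' {true}
      = {ω | S_T ω = true ∧ S_C ω = true} ∪ {ω | S_T ω = true ∧ S_C ω = false} := by
    ext ω; by_cases hc : S_C ω = true <;> simp [hc]
  have hdisj : Disjoint {ω | S_T ω = true ∧ S_C ω = true} {ω | S_T ω = true ∧ S_C ω = false} :=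
    Set.disjoint_left.mpr fun ω h₁ h₂ => by simp_all
  have hmeas : MeasurableSet (Z ⁻¹' {true} ∩ S_T ⁻¹' {true}) :=
    (hZ (measurableSet_singleton true)).inter (hST (measurableSet_singleton true))
  have hobs : ∀ᵐ ω ∂μ[|Z ⁻¹' {true} ∩ S_T ⁻¹' {true}],
      (if Z ω then Y_T ω else Y_C ω) = Y_T ω := by
    filter_upwards [ae_cond_mem hmeas] with ω hω
    simp [show Z ω = true from hω.1]
  have hindep' : IndepFun Z (fun ω => (S_T ω, Y_T ω)) μ :=
    hindep.comp measurable_id (measurable_fst.prodMk (measurable_snd.comp measurable_snd))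
  rw [htreated_survivors, integral_congr_ae hobs,
    hindep'.integral_cond_preimage_inter hZ hST hint (measurableSet_singleton true)
      (measurableSet_singleton true) hpos.ne',
    hsurvivors, integral_cond_union_eq_div hdisj
      ((hST (measurableSet_singleton true)).inter (hSC (measurableSet_singleton false)))
      hint.integrableOn]
  simp only [measureReal_def]

/-- The observed mean outcome among treated survivors is a mixture over the principal
strata `LL` and `LD`:
`E[Y^obs | Z = T, S^obs = L] = (P(LL)·E[Y_T | LL] + P(LD)·E[Y_T | LD]) / (P(LL) + P(LD))`. -/
theorem treated_survivor_mean_is_mixture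
    {Ω : Type*} [MeasurableSpace Ω] (μ : Measure Ω) [IsProbabilityMeasure μ]
    (Z S_T S_C : Ω → Bool) (Y_T Y_C : Ω → ℝ)
    (hZ : Measurable Z) (hST : Measurable S_T) (hSC : Measurable S_C)
    (hYT : Measurable Y_T) (hYC : Measurable Y_C)
    (hpos : 0 < μ {ω | Z ω = true})
    (hindep : IndepFun Z (fun ω => (S_T ω, S_C ω, Y_T ω)) μ)
    (hint : Integrable Y_T μ)
    (hstrata : 0 < μ {ω | S_T ω = true ∧ S_C ω = true}
        + μ {ω | S_T ω = true ∧ S_C ω = false}) :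
    (∫ ω, (if Z ω then Y_T ω else Y_C ω)
        ∂μ[|{ω | Z ω = true ∧ (if Z ω then S_T ω else S_C ω) = true}]) =
      ((μ {ω | S_T ω = true ∧ S_C ω = true}).toReal
          * ∫ ω, Y_T ω ∂μ[|{ω | S_T ω = true ∧ S_C ω = true}]
        + (μ {ω | S_T ω = true ∧ S_C ω = false}).toReal
          * ∫ ω, Y_T ω ∂μ[|{ω | S_T ω = true ∧ S_C ω = false}])
      / ((μ {ω | S_T ω = true ∧ S_C ω = true}).toReal
        + (μ {ω | S_T ω = true ∧ S_C ω = false}).toReal) :=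
  treated_survivor_mean_is_mixture_general μ Z S_T S_C Y_T Y_C hZ hST hSC hpos hindep hint
end

section
/- In a randomized experiment, the observed mean outcome among control survivors is a mixture over the principal strata LL and DL: if P(Z = T) < 1, Z is independent of (S_T, S_C, Y_C), Y_C is integrable, and P(LL) + P(DL) > 0, then E[Y^obs | Z = C, S^obs = L] = (P(LL)·E[Y_C | LL] + P(DL)·E[Y_C | DL]) / (P(LL) + P(DL)). -/
open MeasureTheory ProbabilityTheory

/-! On the control arm the observed outcome is `Y_C` and the observed survival is `S_C`, so the
conditioning event is `{Z = C} ∩ {S_C = L}`. Independence of `Z` and `(S_T, S_C, Y_C)` factors both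
its probability and the integral of `Y_C` over it through `P(Z = C) > 0`, which cancels: the mean
is `E[Y_C | S_C = L]`. As `{S_C = L}` is the disjoint union of `LL` and `DL`, this conditional mean
is the weighted average of the two stratum means. -/

namespace ProbabilityTheory

variable {Ω β γ : Type*} [MeasurableSpace Ω] {μ : Measure Ω}

lemma integral_cond_eq_inv_mul_setIntegral (s : Set Ω) (f : Ω → ℝ) :
    ∫ ω, f ω ∂μ[|s] = (μ.real s)⁻¹ * ∫ ω in s, f ω ∂μ := by
  rw [cond, integral_smul_measure, ENNReal.toReal_inv, smul_eq_mul, measureReal_def]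

lemma measureReal_mul_integral_cond [IsFiniteMeasure μ] (s : Set Ω) (f : Ω → ℝ) :
    μ.real s * ∫ ω, f ω ∂μ[|s] = ∫ ω in s, f ω ∂μ := by
  rw [integral_cond_eq_inv_mul_setIntegral]
  rcases eq_or_ne (μ.real s) 0 with hs | hs
  · rw [hs, zero_mul, setIntegral_measure_zero _ ((measureReal_eq_zero_iff).mp hs)]
  · rw [mul_inv_cancel_left₀ hs]

lemma integral_cond_union [IsFiniteMeasure μ] {s₁ s₂ : Set Ω} {f : Ω → ℝ}
    (hd : Disjoint s₁ s₂) (hs₂ : MeasurableSet s₂) (hf : IntegrableOn f (s₁ ∪ s₂) μ) :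
    ∫ ω, f ω ∂μ[|s₁ ∪ s₂] =
      (μ.real s₁ * ∫ ω, f ω ∂μ[|s₁] + μ.real s₂ * ∫ ω, f ω ∂μ[|s₂])
        / (μ.real s₁ + μ.real s₂) := by
  rw [measureReal_mul_integral_cond, measureReal_mul_integral_cond,
    ← setIntegral_union hd hs₂ hf.left_of_union hf.right_of_union, ← measureReal_union hd hs₂,
    integral_cond_eq_inv_mul_setIntegral, inv_mul_eq_div]

variable [MeasurableSpace β] [MeasurableSpace γ] {X : Ω → β} {W : Ω → γ} {s : Set β}
  {t : Set γ} {g : γ → ℝ}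

lemma IndepFun.setIntegral_preimage_eq_mul (hXW : IndepFun X W μ) (hX : Measurable X)
    (hs : MeasurableSet s) (hg : Measurable g) (hgW : AEStronglyMeasurable (g ∘ W) μ) :
    ∫ ω in X ⁻¹' s, g (W ω) ∂μ = μ.real (X ⁻¹' s) * ∫ ω, g (W ω) ∂μ := by
  have hind : Measurable (s.indicator (1 : β → ℝ)) := measurable_one.indicator hs
  calc ∫ ω in X ⁻¹' s, g (W ω) ∂μ = ∫ ω, s.indicator 1 (X ω) * g (W ω) ∂μ := by
        rw [← integral_indicator (hX hs)]
        congr with ω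
        by_cases h : X ω ∈ s <;> simp [h]
    _ = (∫ ω, s.indicator 1 (X ω) ∂μ) * ∫ ω, g (W ω) ∂μ :=
        (hXW.comp hind hg).integral_fun_mul_eq_mul_integral (hind.comp hX).aestronglyMeasurable hgW
    _ = μ.real (X ⁻¹' s) * ∫ ω, g (W ω) ∂μ := by
        simp_rw [← Set.indicator_comp_right, Pi.one_comp, integral_indicator_one (hX hs)]

lemma IndepFun.integral_cond_preimage_inter_s2 [IsFiniteMeasure μ] (hXW : IndepFun X W μ)
    (hX : Measurable X) (hs : MeasurableSet s) (ht : MeasurableSet t)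
    (hWt : MeasurableSet (W ⁻¹' t)) (hg : Measurable g) (hgW : AEStronglyMeasurable (g ∘ W) μ)
    (hXs : μ (X ⁻¹' s) ≠ 0) :
    ∫ ω, g (W ω) ∂μ[|X ⁻¹' s ∩ W ⁻¹' t] = ∫ ω, g (W ω) ∂μ[|W ⁻¹' t] := by
  have hXs' : μ.real (X ⁻¹' s) ≠ 0 := ENNReal.toReal_ne_zero.mpr ⟨hXs, measure_ne_top μ _⟩
  have hmeas : μ.real (X ⁻¹' s ∩ W ⁻¹' t) = μ.real (X ⁻¹' s) * μ.real (W ⁻¹' t) := by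
    simp only [measureReal_def, hXW.measure_inter_preimage_eq_mul s t hs ht, ENNReal.toReal_mul]
  have hint : ∫ ω in X ⁻¹' s ∩ W ⁻¹' t, g (W ω) ∂μ
      = μ.real (X ⁻¹' s) * ∫ ω in W ⁻¹' t, g (W ω) ∂μ := by
    have := hXW.setIntegral_preimage_eq_mul hX hs (hg.indicator ht)
      ((hgW.indicator hWt).congr (.of_forall fun _ ↦ Set.indicator_comp_right _))
    simpa only [← Set.indicator_comp_right, setIntegral_indicator hWt, integral_indicator hWt,
      Function.comp_apply] using this
  rw [integral_cond_eq_inv_mul_setIntegral, integral_cond_eq_inv_mul_setIntegral, hmeas, hint,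
    mul_inv, mul_comm (μ.real (X ⁻¹' s))⁻¹, mul_assoc, inv_mul_cancel_left₀ hXs']

end ProbabilityTheory

theorem control_survivor_mean_is_mixture_general
    {Ω : Type*} [MeasurableSpace Ω] (μ : Measure Ω) [IsProbabilityMeasure μ]
    (Z S_T S_C : Ω → Bool) (Y_T Y_C : Ω → ℝ)
    (hZ : Measurable Z) (hST : Measurable S_T) (hSC : Measurable S_C)
    (hlt : μ {ω | Z ω = true} < 1)
    (hindep : IndepFun Z (fun ω => (S_T ω, S_C ω, Y_C ω)) μ)
    (hint : Integrable Y_C μ) :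
    (∫ ω, (if Z ω then Y_T ω else Y_C ω)
        ∂μ[|{ω | Z ω = false ∧ (if Z ω then S_T ω else S_C ω) = true}]) =
      ((μ {ω | S_T ω = true ∧ S_C ω = true}).toReal
          * ∫ ω, Y_C ω ∂μ[|{ω | S_T ω = true ∧ S_C ω = true}]
        + (μ {ω | S_T ω = false ∧ S_C ω = true}).toReal
          * ∫ ω, Y_C ω ∂μ[|{ω | S_T ω = false ∧ S_C ω = true}])
      / ((μ {ω | S_T ω = true ∧ S_C ω = true}).toReal
        + (μ {ω | S_T ω = false ∧ S_C ω = true}).toReal) := by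
  set W := fun ω ↦ (S_T ω, S_C ω, Y_C ω)
  have hcontrol : μ (Z ⁻¹' {false}) ≠ 0 := by
    have hcompl : Z ⁻¹' {false} = {ω | Z ω = true}ᶜ := by ext ω; simp
    rw [hcompl, prob_compl_eq_one_sub (s := {ω | Z ω = true}) (hZ (measurableSet_singleton true))]
    exact (tsub_pos_of_lt hlt).ne'
  have hsurvivors : {ω | Z ω = false ∧ (if Z ω then S_T ω else S_C ω) = true}
      = Z ⁻¹' {false} ∩ W ⁻¹' {x | x.2.1 = true} := by
    ext ω; cases hz : Z ω <;> simp [W, hz]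
  have hstrata : W ⁻¹' {x | x.2.1 = true}
      = {ω | S_T ω = true ∧ S_C ω = true} ∪ {ω | S_T ω = false ∧ S_C ω = true} := by
    ext ω; cases h : S_T ω <;> simp [W, h]
  have hLL_DL : Disjoint {ω | S_T ω = true ∧ S_C ω = true} {ω | S_T ω = false ∧ S_C ω = true} :=
    Set.disjoint_left.mpr fun ω h₁ h₂ ↦ by simp_all
  have hmeasDL : MeasurableSet {ω | S_T ω = false ∧ S_C ω = true} :=
    (hST (measurableSet_singleton false)).inter (hSC (measurableSet_singleton true))
  calc ∫ ω, (if Z ω then Y_T ω else Y_C ω)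
        ∂μ[|{ω | Z ω = false ∧ (if Z ω then S_T ω else S_C ω) = true}]
      = ∫ ω, Y_C ω ∂μ[|Z ⁻¹' {false} ∩ W ⁻¹' {x | x.2.1 = true}] := by
        rw [hsurvivors]
        refine integral_congr_ae (ae_cond_of_forall_mem ?_ fun ω hω ↦ ?_)
        · exact (hZ (measurableSet_singleton false)).inter (hSC (measurableSet_singleton true))
        · simp [hω.1.symm]
    _ = ∫ ω, Y_C ω ∂μ[|W ⁻¹' {x | x.2.1 = true}] :=
        hindep.integral_cond_preimage_inter_s2 (g := fun x : Bool × Bool × ℝ ↦ x.2.2) hZ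
          (measurableSet_singleton false) (measurable_snd.fst (measurableSet_singleton true))
          (hSC (measurableSet_singleton true)) measurable_snd.snd hint.aestronglyMeasurable
          hcontrol
    _ = _ := by
        rw [hstrata]
        exact integral_cond_union hLL_DL hmeasDL (hstrata ▸ hint.integrableOn)

/-- The observed mean outcome among control survivors is a mixture over the principal
strata `LL` and `DL`:
`E[Y^obs | Z = C, S^obs = L] = (P(LL)·E[Y_C | LL] + P(DL)·E[Y_C | DL]) / (P(LL) + P(DL))`. -/
theorem control_survivor_mean_is_mixture
    {Ω : Type*} [MeasurableSpace Ω] (μ : Measure Ω) [IsProbabilityMeasure μ]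
    (Z S_T S_C : Ω → Bool) (Y_T Y_C : Ω → ℝ)
    (hZ : Measurable Z) (hST : Measurable S_T) (hSC : Measurable S_C)
    (hYT : Measurable Y_T) (hYC : Measurable Y_C)
    (hlt : μ {ω | Z ω = true} < 1)
    (hindep : IndepFun Z (fun ω => (S_T ω, S_C ω, Y_C ω)) μ)
    (hint : Integrable Y_C μ)
    (hstrata : 0 < μ {ω | S_T ω = true ∧ S_C ω = true}
        + μ {ω | S_T ω = false ∧ S_C ω = true}) :
    (∫ ω, (if Z ω then Y_T ω else Y_C ω)
        ∂μ[|{ω | Z ω = false ∧ (if Z ω then S_T ω else S_C ω) = true}]) =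
      ((μ {ω | S_T ω = true ∧ S_C ω = true}).toReal
          * ∫ ω, Y_C ω ∂μ[|{ω | S_T ω = true ∧ S_C ω = true}]
        + (μ {ω | S_T ω = false ∧ S_C ω = true}).toReal
          * ∫ ω, Y_C ω ∂μ[|{ω | S_T ω = false ∧ S_C ω = true}])
      / ((μ {ω | S_T ω = true ∧ S_C ω = true}).toReal
        + (μ {ω | S_T ω = false ∧ S_C ω = true}).toReal) :=
  control_survivor_mean_is_mixture_general μ Z S_T S_C Y_T Y_C hZ hST hSC hlt hindep hint
end

section
/- The naive comparison of observed survivor means can have the opposite sign of the survivor average causal effect: there exists a probability space with treatment assignment Z : Ω → Bool satisfying P(Z = T) = 1/2, potential survival outcomes S_T, S_C and potential outcomes Y_T, Y_C with Z independent of (S_T, S_C, Y_T, Y_C), such that the principal strata have probabilities P(LL) = 0.2, P(LD) = 0.4, P(DL) = 0.2, P(DD) = 0.2, the survivor average causal effect E[Y_T − Y_C | LL] = 200 > 0 and the causal effect on survival P(S_T = L) − P(S_C = L) = 0.2 > 0, yet the naive survivor contrast E[Y^obs | Z = T, S^obs = L] − E[Y^obs | Z = C, S^obs = L] = 700 − 750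 = −50 < 0. -/
/-!
Take five equally likely units, one in each of the strata `LL`, `DL`, `DD` and two in `LD`, and
assign treatment by a fair coin independent of the unit. The treated survivors are `LL ∪ LD` and
the control survivors are `LL ∪ DL`, so the naive contrast compares different populations: within
`LL` the effect is `1000 - 800 = 200`, but the two `LD` units (outcome `550`) pull the treated
survivor mean down to `(1000 + 2 * 550) / 3 = 700`, while the `DL` unit (outcome `700`) leaves the
control survivor mean at `(800 + 700) / 2 = 750`.
-/

open MeasureTheory ProbabilityTheory Finset

section UniformOn

variable {α β : Type*} [MeasurableSpace α] [MeasurableSpace β]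

lemma uniformOn_univ_prod_uniformOn_univ [Fintype α] [Fintype β]
    [MeasurableSingletonClass α] [MeasurableSingletonClass β] :
    (uniformOn Set.univ : Measure α).prod (uniformOn Set.univ : Measure β) =
      uniformOn Set.univ := by
  refine Measure.ext_of_singleton fun ⟨a, b⟩ => ?_
  rw [uniformOn_univ, Measure.count_singleton, ← Set.singleton_prod_singleton, Measure.prod_prod]
  simp only [uniformOn_univ, Measure.count_singleton, Fintype.card_prod, Nat.cast_mul, one_div]
  exact (ENNReal.mul_inv (by simp) (by simp)).symm

variable [MeasurableSingletonClass α]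

lemma uniformOn_univ_setOf [Fintype α] (p : α → Prop) [DecidablePred p] :
    uniformOn Set.univ {x | p x} = #{x | p x} / Fintype.card α := by
  rw [uniformOn_univ, ← coe_filter_univ, Measure.count_apply_finset]

lemma uniformOn_univ_setOf_eq_div [Fintype α] [Nonempty α] (p : α → Prop) [DecidablePred p]
    {a b : ℕ} (hb : b ≠ 0) (h : #{x | p x} * b = a * Fintype.card α) :
    uniformOn Set.univ {x | p x} = (a : ENNReal) / b := by
  rw [uniformOn_univ_setOf, ENNReal.div_eq_div_iff (by simpa) (by simp) (by simp) (by simp)]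
  exact_mod_cast (by linarith : b * #{x | p x} = Fintype.card α * a)

lemma integral_uniformOn_finset [Finite α] (s : Finset α) (f : α → ℝ) :
    ∫ x, f x ∂uniformOn (s : Set α) = (∑ x ∈ s, f x) / #s := by
  rw [uniformOn, ProbabilityTheory.cond, integral_smul_measure,
    setIntegral_finset _ Integrable.of_finite.integrableOn, Measure.count_apply_finset,
    ENNReal.toReal_inv, ENNReal.toReal_natCast, smul_eq_mul, inv_mul_eq_div]
  simp

lemma integral_cond_uniformOn_univ_setOf [Fintype α] (p : α → Prop) [DecidablePred p]
    (f : α → ℝ) :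
    ∫ x, f x ∂(uniformOn Set.univ)[|{x | p x}] = (∑ x with p x, f x) / #{x | p x} := by
  rw [uniformOn, cond_cond_eq_cond_inter .univ .of_discrete, Set.univ_inter, ← coe_filter_univ,
    ← uniformOn, integral_uniformOn_finset]

end UniformOn

namespace NaiveSurvivorContrast

def survivesT : Fin 5 → Bool := ![true, true, true, false, false]
def survivesC : Fin 5 → Bool := ![true, false, false, true, false]

def outcomeT : Fin 5 → ℝ := ![1000, 550, 550, 0, 0]
def outcomeC : Fin 5 → ℝ := ![800, 0, 0, 700, 0]

/-- An outcome `ω` is the treatment assignment `ω.1` together with the unit `ω.2`. -/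
abbrev Ω := Bool × Fin 5

local notation "P" => (uniformOn Set.univ : Measure Ω)

lemma indepFun_assignment :
    IndepFun Prod.fst
      (fun ω : Ω => (survivesT ω.2, survivesC ω.2, outcomeT ω.2, outcomeC ω.2)) P := by
  rw [← uniformOn_univ_prod_uniformOn_univ]
  exact indepFun_prod measurable_id
    (measurable_of_countable fun u => (survivesT u, survivesC u, outcomeT u, outcomeC u))

lemma measure_assigned_treatment : P {ω | ω.1 = true} = 1 / 2 := by
  rw [uniformOn_univ_setOf_eq_div _ (a := 1) (b := 2) (by norm_num) (by decide)]
  norm_num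

lemma measure_LL : P {ω | survivesT ω.2 = true ∧ survivesC ω.2 = true} = 1 / 5 := by
  rw [uniformOn_univ_setOf_eq_div _ (a := 1) (b := 5) (by norm_num) (by decide)]
  norm_num

lemma measure_LD : P {ω | survivesT ω.2 = true ∧ survivesC ω.2 = false} = 2 / 5 := by
  rw [uniformOn_univ_setOf_eq_div _ (a := 2) (b := 5) (by norm_num) (by decide)]
  norm_num

lemma measure_DL : P {ω | survivesT ω.2 = false ∧ survivesC ω.2 = true} = 1 / 5 := by
  rw [uniformOn_univ_setOf_eq_div _ (a := 1) (b := 5) (by norm_num) (by decide)]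
  norm_num

lemma measure_DD : P {ω | survivesT ω.2 = false ∧ survivesC ω.2 = false} = 1 / 5 := by
  rw [uniformOn_univ_setOf_eq_div _ (a := 1) (b := 5) (by norm_num) (by decide)]
  norm_num

lemma measure_survivesT : P {ω | survivesT ω.2 = true} = 3 / 5 := by
  rw [uniformOn_univ_setOf_eq_div _ (a := 3) (b := 5) (by norm_num) (by decide)]
  norm_num

lemma measure_survivesC : P {ω | survivesC ω.2 = true} = 2 / 5 := by
  rw [uniformOn_univ_setOf_eq_div _ (a := 2) (b := 5) (by norm_num) (by decide)]
  norm_num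

lemma survival_effect :
    (P {ω | survivesT ω.2 = true}).toReal - (P {ω | survivesC ω.2 = true}).toReal = 1 / 5 := by
  rw [measure_survivesT, measure_survivesC, ENNReal.toReal_div, ENNReal.toReal_div]
  norm_num

lemma survivor_average_causal_effect :
    ∫ ω, (outcomeT ω.2 - outcomeC ω.2) ∂P[|{ω | survivesT ω.2 = true ∧ survivesC ω.2 = true}] =
      200 := by
  rw [integral_cond_uniformOn_univ_setOf, Finset.sum_filter, Finset.card_filter]
  simp only [Fintype.sum_prod_type, Fintype.sum_bool, Fin.sum_univ_succ]
  simp [survivesT, survivesC, outcomeT, outcomeC]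
  norm_num

lemma treated_survivor_mean :
    ∫ ω, (if ω.1 then outcomeT ω.2 else outcomeC ω.2)
      ∂P[|{ω | ω.1 = true ∧ (if ω.1 then survivesT ω.2 else survivesC ω.2) = true}] = 700 := by
  rw [integral_cond_uniformOn_univ_setOf, Finset.sum_filter, Finset.card_filter]
  simp only [Fintype.sum_prod_type, Fintype.sum_bool, Fin.sum_univ_succ]
  simp [survivesT, survivesC, outcomeT]
  norm_num

lemma control_survivor_mean :
    ∫ ω, (if ω.1 then outcomeT ω.2 else outcomeC ω.2)
      ∂P[|{ω | ω.1 = false ∧ (if ω.1 then survivesT ω.2 else survivesC ω.2) = true}] = 750 := by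
  rw [integral_cond_uniformOn_univ_setOf, Finset.sum_filter, Finset.card_filter]
  simp only [Fintype.sum_prod_type, Fintype.sum_bool, Fin.sum_univ_succ]
  simp [survivesT, survivesC, outcomeC]
  norm_num

end NaiveSurvivorContrast

/-- The naive comparison of observed survivor means can have the opposite sign of the
survivor average causal effect: there is a randomized experiment with
`P(LL) = 0.2`, `P(LD) = 0.4`, `P(DL) = 0.2`, `P(DD) = 0.2`, survivor average causal effect
`E[Y_T − Y_C | LL] = 200 > 0`, causal effect on survival
`P(S_T = L) − P(S_C = L) = 0.2 > 0`, yet the naive survivor contrast is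
`E[Y^obs | Z = T, S^obs = L] − E[Y^obs | Z = C, S^obs = L] = 700 − 750 = −50 < 0`. -/
theorem naive_survivor_contrast_can_reverse_sign :
    ∃ (Ω : Type) (_ : MeasurableSpace Ω) (μ : Measure Ω)
      (Z S_T S_C : Ω → Bool) (Y_T Y_C : Ω → ℝ),
      IsProbabilityMeasure μ ∧
      Measurable Z ∧ Measurable S_T ∧ Measurable S_C ∧
      Measurable Y_T ∧ Measurable Y_C ∧
      Integrable Y_T μ ∧ Integrable Y_C μ ∧
      μ {ω | Z ω = true} = 1/2 ∧
      IndepFun Z (fun ω => (S_T ω, S_C ω, Y_T ω, Y_C ω)) μ ∧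
      μ {ω | S_T ω = true ∧ S_C ω = true} = 1/5 ∧
      μ {ω | S_T ω = true ∧ S_C ω = false} = 2/5 ∧
      μ {ω | S_T ω = false ∧ S_C ω = true} = 1/5 ∧
      μ {ω | S_T ω = false ∧ S_C ω = false} = 1/5 ∧
      (∫ ω, (Y_T ω - Y_C ω) ∂μ[|{ω | S_T ω = true ∧ S_C ω = true}]) = 200 ∧
      (0 : ℝ) < 200 ∧
      (μ {ω | S_T ω = true}).toReal - (μ {ω | S_C ω = true}).toReal = 1/5 ∧
      (0 : ℝ) < 1/5 ∧
      (∫ ω, (if Z ω then Y_T ω else Y_C ω)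
          ∂μ[|{ω | Z ω = true ∧ (if Z ω then S_T ω else S_C ω) = true}]) = 700 ∧
      (∫ ω, (if Z ω then Y_T ω else Y_C ω)
          ∂μ[|{ω | Z ω = false ∧ (if Z ω then S_T ω else S_C ω) = true}]) = 750 ∧
      (∫ ω, (if Z ω then Y_T ω else Y_C ω)
          ∂μ[|{ω | Z ω = true ∧ (if Z ω then S_T ω else S_C ω) = true}])
        - (∫ ω, (if Z ω then Y_T ω else Y_C ω)
          ∂μ[|{ω | Z ω = false ∧ (if Z ω then S_T ω else S_C ω) = true}]) = -50 ∧
      ((-50 : ℝ) < 0) := by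
  open NaiveSurvivorContrast in
  exact ⟨Ω, inferInstance, uniformOn Set.univ, Prod.fst, fun ω => survivesT ω.2,
    fun ω => survivesC ω.2, fun ω => outcomeT ω.2, fun ω => outcomeC ω.2,
    inferInstance, .of_discrete, .of_discrete, .of_discrete, .of_discrete, .of_discrete,
    .of_finite, .of_finite, measure_assigned_treatment, indepFun_assignment,
    measure_LL, measure_LD, measure_DL, measure_DD, survivor_average_causal_effect, by norm_num,
    survival_effect, by norm_num, treated_survivor_mean, control_survivor_mean,
    by rw [treated_survivor_mean, control_survivor_mean]; norm_num, by norm_num⟩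
end

section
/- Under monotonicity, the control arm of a randomized experiment identifies both the size of the LL stratum and its mean control outcome: if P(Z = T) < 1, Z is independent of (S_T, S_C, Y_C), Y_C is integrable, P(DL) = 0, and P(LL) > 0, then P(LL) = P(S^obs = L | Z = C) and E[Y_C | LL] = E[Y^obs | Z = C, S^obs = L]. -/
/-!
Randomization makes the control arm `Z = C` independent of `(S_T, S_C, Y_C)`, so conditioning
on it leaves the joint law of `(S_T, S_C, Y_C)` unchanged, also after further conditioning on
`S_C = L`. In the control arm the observed variables are `S_C` and `Y_C`, and under monotonicity
the event `S_C = L` is `LL` up to a null set.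
-/

open MeasureTheory ProbabilityTheory

namespace ProbabilityTheory

variable {Ω α β : Type*} [MeasurableSpace Ω] [MeasurableSpace α] [MeasurableSpace β]
  {μ : Measure Ω}

lemma cond_congr_ae {s t : Set Ω} (h : s =ᵐ[μ] t) : μ[|s] = μ[|t] := by
  rw [cond, cond, measure_congr h, Measure.restrict_congr_set h]

lemma map_cond_preimage {Y : Ω → β} (hY : Measurable Y) {t : Set β} (ht : MeasurableSet t) :
    (μ[|Y ⁻¹' t]).map Y = (μ.map Y)[|t] := by
  rw [cond, cond, Measure.map_smul, Measure.restrict_map hY ht, Measure.map_apply hY ht]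

lemma IndepFun.map_cond_preimage_left [IsFiniteMeasure μ] {X : Ω → α} {Y : Ω → β}
    (hXY : IndepFun X Y μ) (hX : Measurable X) (hY : Measurable Y) {s : Set α}
    (hs : MeasurableSet s) (hμs : μ (X ⁻¹' s) ≠ 0) :
    (μ[|X ⁻¹' s]).map Y = μ.map Y := by
  ext t ht
  rw [Measure.map_apply hY ht, Measure.map_apply hY ht, cond_apply (hX hs),
    hXY.measure_inter_preimage_eq_mul s t hs ht, ← mul_assoc,
    ENNReal.inv_mul_cancel hμs (measure_ne_top μ _), one_mul]

lemma IndepFun.map_cond_cond_preimage [IsFiniteMeasure μ] {X : Ω → α} {Y : Ω → β}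
    (hXY : IndepFun X Y μ) (hX : Measurable X) (hY : Measurable Y) {s : Set α}
    (hs : MeasurableSet s) (hμs : μ (X ⁻¹' s) ≠ 0) {t : Set β} (ht : MeasurableSet t) :
    (μ[|X ⁻¹' s][|Y ⁻¹' t]).map Y = (μ[|Y ⁻¹' t]).map Y := by
  rw [map_cond_preimage hY ht, map_cond_preimage hY ht, hXY.map_cond_preimage_left hX hY hs hμs]

lemma setOf_eq_true_ae_eq_setOf_and {a b : Ω → Bool}
    (h : μ {ω | a ω = false ∧ b ω = true} = 0) :
    {ω | b ω = true} =ᵐ[μ] {ω | a ω = true ∧ b ω = true} := by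
  refine ae_eq_set.2 ⟨measure_mono_null ?_ h, ?_⟩
  · rintro ω ⟨hb : b ω = true, hab⟩
    simpa [hb] using hab
  · rw [Set.sdiff_eq_empty.2 fun ω hω => hω.2, measure_empty]

end ProbabilityTheory

theorem monotonicity_control_arm_identifies_LL_general
    {Ω : Type*} [MeasurableSpace Ω] (μ : Measure Ω) [IsProbabilityMeasure μ]
    (Z S_T S_C : Ω → Bool) (Y_T Y_C : Ω → ℝ)
    (hZ : Measurable Z) (hST : Measurable S_T) (hSC : Measurable S_C)
    (hYC : Measurable Y_C)
    (hlt : μ {ω | Z ω = true} < 1)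
    (hindep : IndepFun Z (fun ω => (S_T ω, S_C ω, Y_C ω)) μ)
    (hmono : μ {ω | S_T ω = false ∧ S_C ω = true} = 0) :
    μ {ω | S_T ω = true ∧ S_C ω = true} =
        μ[|{ω | Z ω = false}] {ω | (if Z ω then S_T ω else S_C ω) = true} ∧
    (∫ ω, Y_C ω ∂μ[|{ω | S_T ω = true ∧ S_C ω = true}]) =
        ∫ ω, (if Z ω then Y_T ω else Y_C ω)
          ∂μ[|{ω | Z ω = false ∧ (if Z ω then S_T ω else S_C ω) = true}] := by
  set W : Ω → Bool × Bool × ℝ := fun ω => (S_T ω, S_C ω, Y_C ω)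
  set C : Set Ω := Z ⁻¹' {false}
  set L : Set (Bool × Bool × ℝ) := {p | p.2.1 = true}
  have hW : Measurable W := hST.prodMk (hSC.prodMk hYC)
  have hC : MeasurableSet C := hZ (measurableSet_singleton false)
  have hL : MeasurableSet L := measurable_fst.comp measurable_snd (measurableSet_singleton true)
  have hμC : μ C ≠ 0 := by
    have hCc : C = (Z ⁻¹' {true})ᶜ := by ext; simp [C]
    rw [hCc, prob_compl_eq_one_sub (hZ (measurableSet_singleton true))]
    exact (tsub_pos_of_lt hlt).ne'
  have hsurv : {ω | S_C ω = true} =ᵐ[μ] {ω | S_T ω = true ∧ S_C ω = true} :=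
    setOf_eq_true_ae_eq_setOf_and hmono
  have hC_ae : ∀ᵐ ω ∂μ[|C], ω ∈ C := ae_cond_mem hC
  constructor
  · calc μ {ω | S_T ω = true ∧ S_C ω = true} = μ (W ⁻¹' L) := (measure_congr hsurv).symm
      _ = (μ[|C]).map W L := by
        rw [hindep.map_cond_preimage_left hZ hW (measurableSet_singleton false) hμC,
          Measure.map_apply hW hL]
      _ = _ := by
        rw [Measure.map_apply hW hL]
        refine measure_congr (Filter.eventuallyEq_set.2 ?_)
        filter_upwards [hC_ae] with ω (hω : Z ω = false)
        simp [hω, W, L]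
  · have hset :
        {ω | Z ω = false ∧ (if Z ω then S_T ω else S_C ω) = true} = C ∩ W ⁻¹' L := by
      ext ω; cases h : Z ω <;> simp [h, C, W, L]
    have hg : Measurable fun p : Bool × Bool × ℝ => p.2.2 := measurable_snd.comp measurable_snd
    calc ∫ ω, Y_C ω ∂μ[|{ω | S_T ω = true ∧ S_C ω = true}]
        = ∫ p, p.2.2 ∂(μ[|W ⁻¹' L]).map W := by
          rw [← cond_congr_ae hsurv, integral_map hW.aemeasurable hg.aestronglyMeasurable]
          rfl
      _ = ∫ ω, Y_C ω ∂μ[|C][|W ⁻¹' L] := by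
          rw [← hindep.map_cond_cond_preimage hZ hW (measurableSet_singleton false) hμC hL,
            integral_map hW.aemeasurable hg.aestronglyMeasurable]
      _ = _ := by
          rw [hset, ← cond_cond_eq_cond_inter hC (hW hL)]
          refine integral_congr_ae ?_
          filter_upwards [cond_absolutelyContinuous.ae_le hC_ae] with ω (hω : Z ω = false)
          simp [hω]

/-- Under monotonicity (no defiers, `P(DL) = 0`), the control arm identifies both the size
of the `LL` stratum and its mean control outcome:
`P(LL) = P(S^obs = L | Z = C)` and `E[Y_C | LL] = E[Y^obs | Z = C, S^obs = L]`. -/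
theorem monotonicity_control_arm_identifies_LL
    {Ω : Type*} [MeasurableSpace Ω] (μ : Measure Ω) [IsProbabilityMeasure μ]
    (Z S_T S_C : Ω → Bool) (Y_T Y_C : Ω → ℝ)
    (hZ : Measurable Z) (hST : Measurable S_T) (hSC : Measurable S_C)
    (hYT : Measurable Y_T) (hYC : Measurable Y_C)
    (hlt : μ {ω | Z ω = true} < 1)
    (hindep : IndepFun Z (fun ω => (S_T ω, S_C ω, Y_C ω)) μ)
    (hint : Integrable Y_C μ)
    (hmono : μ {ω | S_T ω = false ∧ S_C ω = true} = 0)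
    (hLL : 0 < μ {ω | S_T ω = true ∧ S_C ω = true}) :
    μ {ω | S_T ω = true ∧ S_C ω = true} =
        μ[|{ω | Z ω = false}] {ω | (if Z ω then S_T ω else S_C ω) = true} ∧
    (∫ ω, Y_C ω ∂μ[|{ω | S_T ω = true ∧ S_C ω = true}]) =
        ∫ ω, (if Z ω then Y_T ω else Y_C ω)
          ∂μ[|{ω | Z ω = false ∧ (if Z ω then S_T ω else S_C ω) = true}] :=
  monotonicity_control_arm_identifies_LL_general μ Z S_T S_C Y_T Y_C hZ hST hSC hYC hlt hindep hmono
end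

section
/- The observed-data distribution does not depend on the joint distribution of treatment and control potential outcomes beyond the strata probabilities and within-stratum marginals: suppose two probability measures P₁ and P₂ on potential-outcome vectors (S_T, S_C, Y_T, Y_C) assign the same probabilities to each of the four principal strata LL, LD, DL, DD, and for each stratum G the conditional distribution of Y_T given G under P₁ equals that under P₂, and the conditional distribution of Y_C given G under P₁ equals that under P₂. If in each case treatment assignment Z is independent of the potential outcomes with the same marginal P(Z = T), then the joint distributions of the observed data (Z, S^obs, Y^obs·1{S^obs = L}) under P₁ and P₂ coincide. -/
/-!
Condition on the treatment assignment `Z`: by independence, the potential outcomes keep their law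
on `{Z = z}`, so the observed law is the mixture over `z`, with weights `P(Z = z)`, of the laws of
the pairs `truncByDeath S_z Y_z = (S_z, Y_z·1{S_z = L})`. Condition next on the principal stratum
`(S_T, S_C)`: on a stratum where `S_z = L` this pair is `(L, Y_z)`, and elsewhere it is the
constant `(D, 0)`. So its law is the mixture, with the strata probabilities as weights, of the
within-stratum laws of `Y_z` and of Dirac masses.
-/

open MeasureTheory ProbabilityTheory Set

section

variable {Ω Ω₁ Ω₂ α β γ : Type*} [MeasurableSpace Ω] [MeasurableSpace Ω₁] [MeasurableSpace Ω₂]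

theorem measurable_fiberwise_apply [MeasurableSpace α] [MeasurableSpace β] [MeasurableSpace γ]
    [Countable α] [MeasurableSingletonClass α] {G : Ω → α} {W : Ω → β} {F : α → β → γ}
    (hG : Measurable G) (hW : Measurable W) (hF : ∀ a, Measurable (F a)) :
    Measurable fun ω => F (G ω) (W ω) :=
  (measurable_from_prod_countable_left (f := fun p : β × α => F p.2 p.1) hF).comp
    (hW.prodMk hG)

theorem map_eq_sum_smul_map_cond [MeasurableSpace α] [MeasurableSpace γ] [Fintype α]
    [DiscreteMeasurableSpace α] (μ : Measure Ω) [IsFiniteMeasure μ] {G : Ω → α} {H : Ω → γ}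
    (hG : Measurable G) (hH : Measurable H) :
    μ.map H = ∑ a, μ (G ⁻¹' {a}) • (μ[|G ← a]).map H := by
  conv_lhs => rw [← sum_meas_smul_cond_fiber hG μ]
  simp only [← Measure.mapₗ_apply_of_measurable hH, map_sum, map_smul]

theorem map_cond_fiber_eq [MeasurableSpace α] [MeasurableSingletonClass α] [MeasurableSpace γ]
    (μ : Measure Ω) {G : Ω → α} {W : Ω → β} {F : α → β → γ} (hG : Measurable G) (a : α) :
    (μ[|G ← a]).map (fun ω => F (G ω) (W ω)) = (μ[|G ← a]).map (fun ω => F a (W ω)) :=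
  Measure.map_congr <| ae_cond_of_forall_mem (hG (measurableSet_singleton a))
    fun ω (h : G ω = a) => congrArg (F · (W ω)) h

theorem map_fiberwise_eq_of_map_cond_eq [MeasurableSpace α] [MeasurableSpace β]
    [MeasurableSpace γ] [Fintype α] [DiscreteMeasurableSpace α]
    (μ₁ : Measure Ω₁) (μ₂ : Measure Ω₂) [IsFiniteMeasure μ₁] [IsFiniteMeasure μ₂]
    {G₁ : Ω₁ → α} {G₂ : Ω₂ → α} {W₁ : Ω₁ → β} {W₂ : Ω₂ → β} {F : α → β → γ}
    (hG₁ : Measurable G₁) (hG₂ : Measurable G₂) (hW₁ : Measurable W₁) (hW₂ : Measurable W₂)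
    (hF : ∀ a, Measurable (F a)) (hfiber : ∀ a, μ₁ (G₁ ⁻¹' {a}) = μ₂ (G₂ ⁻¹' {a}))
    (hcond : ∀ a, μ₁ (G₁ ⁻¹' {a}) ≠ 0 →
      (μ₁[|G₁ ← a]).map (fun ω => F a (W₁ ω)) = (μ₂[|G₂ ← a]).map (fun ω => F a (W₂ ω))) :
    μ₁.map (fun ω => F (G₁ ω) (W₁ ω)) = μ₂.map (fun ω => F (G₂ ω) (W₂ ω)) := by
  rw [map_eq_sum_smul_map_cond μ₁ hG₁ (measurable_fiberwise_apply hG₁ hW₁ hF),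
    map_eq_sum_smul_map_cond μ₂ hG₂ (measurable_fiberwise_apply hG₂ hW₂ hF)]
  refine Finset.sum_congr rfl fun a _ => ?_
  rw [map_cond_fiber_eq μ₁ hG₁, map_cond_fiber_eq μ₂ hG₂, ← hfiber a]
  by_cases h : μ₁ (G₁ ⁻¹' {a}) = 0
  · rw [h, zero_smul, zero_smul]
  · rw [hcond a h]

theorem ProbabilityTheory.IndepFun.map_cond_eq [MeasurableSpace α] [MeasurableSingletonClass α]
    [MeasurableSpace β] {μ : Measure Ω} [IsFiniteMeasure μ] {Z : Ω → α} {V : Ω → β}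
    (hZ : Measurable Z) (hV : Measurable V) (hind : IndepFun Z V μ) {a : α}
    (ha : μ (Z ⁻¹' {a}) ≠ 0) : (μ[|Z ← a]).map V = μ.map V := by
  ext B hB
  rw [Measure.map_apply hV hB, Measure.map_apply hV hB,
    cond_apply (hZ (measurableSet_singleton a)),
    hind.measure_inter_preimage_eq_mul _ _ (measurableSet_singleton a) hB, ← mul_assoc,
    ENNReal.inv_mul_cancel ha (measure_ne_top _ _), one_mul]

theorem map_prodMk_eq_of_indepFun [MeasurableSpace α] [MeasurableSpace β]
    [MeasurableSpace γ] [Fintype α] [DiscreteMeasurableSpace α]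
    (μ₁ : Measure Ω₁) (μ₂ : Measure Ω₂) [IsFiniteMeasure μ₁] [IsFiniteMeasure μ₂]
    {Z₁ : Ω₁ → α} {Z₂ : Ω₂ → α} {V₁ : Ω₁ → β} {V₂ : Ω₂ → β} {F : α → β → γ}
    (hZ₁ : Measurable Z₁) (hZ₂ : Measurable Z₂) (hV₁ : Measurable V₁) (hV₂ : Measurable V₂)
    (hF : ∀ a, Measurable (F a)) (hind₁ : IndepFun Z₁ V₁ μ₁) (hind₂ : IndepFun Z₂ V₂ μ₂)
    (hfiber : ∀ a, μ₁ (Z₁ ⁻¹' {a}) = μ₂ (Z₂ ⁻¹' {a}))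
    (hmap : ∀ a, μ₁.map (fun ω => F a (V₁ ω)) = μ₂.map (fun ω => F a (V₂ ω))) :
    μ₁.map (fun ω => (Z₁ ω, F (Z₁ ω) (V₁ ω))) = μ₂.map (fun ω => (Z₂ ω, F (Z₂ ω) (V₂ ω))) := by
  have hpair : ∀ a, Measurable fun v => (a, F a v) := fun a => measurable_prodMk_left.comp (hF a)
  refine map_fiberwise_eq_of_map_cond_eq μ₁ μ₂ (F := fun a v => (a, F a v)) hZ₁ hZ₂ hV₁ hV₂ hpair
    hfiber fun a ha => ?_
  calc (μ₁[|Z₁ ← a]).map (fun ω => (a, F a (V₁ ω)))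
      = μ₁.map (fun ω => (a, F a (V₁ ω))) :=
        (hind₁.comp measurable_id (hpair a)).map_cond_eq hZ₁ ((hpair a).comp hV₁) ha
    _ = (μ₁.map fun ω => F a (V₁ ω)).map (Prod.mk a) :=
        (Measure.map_map measurable_prodMk_left ((hF a).comp hV₁)).symm
    _ = (μ₂.map fun ω => F a (V₂ ω)).map (Prod.mk a) := by rw [hmap a]
    _ = μ₂.map (fun ω => (a, F a (V₂ ω))) :=
        Measure.map_map measurable_prodMk_left ((hF a).comp hV₂)
    _ = (μ₂[|Z₂ ← a]).map (fun ω => (a, F a (V₂ ω))) :=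
        ((hind₂.comp measurable_id (hpair a)).map_cond_eq hZ₂ ((hpair a).comp hV₂)
          (hfiber a ▸ ha)).symm

def truncByDeath [Zero β] (s : Bool) (y : β) : Bool × β := (s, if s then y else 0)

theorem measurable_truncByDeath [MeasurableSpace β] [Zero β] (s : Bool) :
    Measurable (truncByDeath (β := β) s) := by
  cases s
  · exact (measurable_const : Measurable fun _ : β => ((false, 0) : Bool × β))
  · exact measurable_prodMk_left

theorem Measurable.truncByDeath [MeasurableSpace β] [Zero β] {S : Ω → Bool} {Y : Ω → β}
    (hS : Measurable S) (hY : Measurable Y) : Measurable fun ω => truncByDeath (S ω) (Y ω) :=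
  measurable_fiberwise_apply hS hY measurable_truncByDeath

theorem map_truncByDeath_eq_of_strata [MeasurableSpace α] [MeasurableSpace β] [Zero β]
    [Fintype α] [DiscreteMeasurableSpace α]
    (μ₁ : Measure Ω₁) (μ₂ : Measure Ω₂) [IsFiniteMeasure μ₁] [IsFiniteMeasure μ₂]
    {G₁ : Ω₁ → α} {G₂ : Ω₂ → α} {Y₁ : Ω₁ → β} {Y₂ : Ω₂ → β} (s : α → Bool)
    (hG₁ : Measurable G₁) (hG₂ : Measurable G₂) (hY₁ : Measurable Y₁) (hY₂ : Measurable Y₂)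
    (hstrata : ∀ a, μ₁ (G₁ ⁻¹' {a}) = μ₂ (G₂ ⁻¹' {a}))
    (hcond : ∀ a, s a = true → (μ₁[|G₁ ← a]).map Y₁ = (μ₂[|G₂ ← a]).map Y₂) :
    μ₁.map (fun ω => truncByDeath (s (G₁ ω)) (Y₁ ω))
      = μ₂.map (fun ω => truncByDeath (s (G₂ ω)) (Y₂ ω)) := by
  refine map_fiberwise_eq_of_map_cond_eq μ₁ μ₂ (F := fun a => truncByDeath (s a)) hG₁ hG₂ hY₁ hY₂
    (fun a => measurable_truncByDeath (s a)) hstrata fun a ha => ?_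
  cases hs : s a
  · have := cond_isProbabilityMeasure ha
    have := cond_isProbabilityMeasure (hstrata a ▸ ha)
    simp [truncByDeath, Measure.map_const]
  · change (μ₁[|G₁ ← a]).map (Prod.mk true ∘ Y₁) = (μ₂[|G₂ ← a]).map (Prod.mk true ∘ Y₂)
    rw [← Measure.map_map measurable_prodMk_left hY₁, ← Measure.map_map measurable_prodMk_left hY₂,
      hcond a hs]

end

theorem observed_data_dist_determined_by_strata_and_marginals_general
    {Ω₁ Ω₂ : Type*} [MeasurableSpace Ω₁] [MeasurableSpace Ω₂]
    (μ₁ : Measure Ω₁) (μ₂ : Measure Ω₂)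
    [IsProbabilityMeasure μ₁] [IsProbabilityMeasure μ₂]
    (Z₁ ST₁ SC₁ : Ω₁ → Bool) (YT₁ YC₁ : Ω₁ → ℝ)
    (Z₂ ST₂ SC₂ : Ω₂ → Bool) (YT₂ YC₂ : Ω₂ → ℝ)
    (hZ₁ : Measurable Z₁) (hST₁ : Measurable ST₁) (hSC₁ : Measurable SC₁)
    (hYT₁ : Measurable YT₁) (hYC₁ : Measurable YC₁)
    (hZ₂ : Measurable Z₂) (hST₂ : Measurable ST₂) (hSC₂ : Measurable SC₂)
    (hYT₂ : Measurable YT₂) (hYC₂ : Measurable YC₂)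
    (hindep₁ : IndepFun Z₁ (fun ω => (ST₁ ω, SC₁ ω, YT₁ ω, YC₁ ω)) μ₁)
    (hindep₂ : IndepFun Z₂ (fun ω => (ST₂ ω, SC₂ ω, YT₂ ω, YC₂ ω)) μ₂)
    (hZeq : μ₁ {ω | Z₁ ω = true} = μ₂ {ω | Z₂ ω = true})
    (hLL : μ₁ {ω | ST₁ ω = true ∧ SC₁ ω = true} = μ₂ {ω | ST₂ ω = true ∧ SC₂ ω = true})
    (hLD : μ₁ {ω | ST₁ ω = true ∧ SC₁ ω = false} = μ₂ {ω | ST₂ ω = true ∧ SC₂ ω = false})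
    (hDL : μ₁ {ω | ST₁ ω = false ∧ SC₁ ω = true} = μ₂ {ω | ST₂ ω = false ∧ SC₂ ω = true})
    (hDD : μ₁ {ω | ST₁ ω = false ∧ SC₁ ω = false} = μ₂ {ω | ST₂ ω = false ∧ SC₂ ω = false})
    (hYT_LL : Measure.map YT₁ (μ₁[|{ω | ST₁ ω = true ∧ SC₁ ω = true}]) =
      Measure.map YT₂ (μ₂[|{ω | ST₂ ω = true ∧ SC₂ ω = true}]))
    (hYT_LD : Measure.map YT₁ (μ₁[|{ω | ST₁ ω = true ∧ SC₁ ω = false}]) =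
      Measure.map YT₂ (μ₂[|{ω | ST₂ ω = true ∧ SC₂ ω = false}]))
    (hYC_LL : Measure.map YC₁ (μ₁[|{ω | ST₁ ω = true ∧ SC₁ ω = true}]) =
      Measure.map YC₂ (μ₂[|{ω | ST₂ ω = true ∧ SC₂ ω = true}]))
    (hYC_DL : Measure.map YC₁ (μ₁[|{ω | ST₁ ω = false ∧ SC₁ ω = true}]) =
      Measure.map YC₂ (μ₂[|{ω | ST₂ ω = false ∧ SC₂ ω = true}])) :
    Measure.map (fun ω =>
        (Z₁ ω, (if Z₁ ω then ST₁ ω else SC₁ ω),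
          if (if Z₁ ω then ST₁ ω else SC₁ ω) then (if Z₁ ω then YT₁ ω else YC₁ ω) else 0)) μ₁
      = Measure.map (fun ω =>
        (Z₂ ω, (if Z₂ ω then ST₂ ω else SC₂ ω),
          if (if Z₂ ω then ST₂ ω else SC₂ ω) then (if Z₂ ω then YT₂ ω else YC₂ ω) else 0)) μ₂ := by
  have hV₁ : Measurable fun ω => (ST₁ ω, SC₁ ω, YT₁ ω, YC₁ ω) := by fun_prop
  have hV₂ : Measurable fun ω => (ST₂ ω, SC₂ ω, YT₂ ω, YC₂ ω) := by fun_prop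
  have hG₁ : Measurable fun ω => (ST₁ ω, SC₁ ω) := hST₁.prodMk hSC₁
  have hG₂ : Measurable fun ω => (ST₂ ω, SC₂ ω) := hST₂.prodMk hSC₂
  have hstrata : ∀ a : Bool × Bool, μ₁ ((fun ω => (ST₁ ω, SC₁ ω)) ⁻¹' {a})
      = μ₂ ((fun ω => (ST₂ ω, SC₂ ω)) ⁻¹' {a}) := by
    simp only [Prod.forall, Bool.forall_bool, ← singleton_prod_singleton, mk_preimage_prod]
    exact ⟨⟨hDD, hDL⟩, hLD, hLL⟩
  have armT := map_truncByDeath_eq_of_strata μ₁ μ₂ Prod.fst hG₁ hG₂ hYT₁ hYT₂ hstrata <| by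
    simp only [Prod.forall, Bool.forall_bool, ← singleton_prod_singleton, mk_preimage_prod]
    exact ⟨⟨nofun, nofun⟩, fun _ => hYT_LD, fun _ => hYT_LL⟩
  have armC := map_truncByDeath_eq_of_strata μ₁ μ₂ Prod.snd hG₁ hG₂ hYC₁ hYC₂ hstrata <| by
    simp only [Prod.forall, Bool.forall_bool, ← singleton_prod_singleton, mk_preimage_prod]
    exact ⟨⟨nofun, fun _ => hYC_DL⟩, nofun, fun _ => hYC_LL⟩
  have hZF : μ₁ (Z₁ ⁻¹' {false}) = μ₂ (Z₂ ⁻¹' {false}) := by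
    rw [← Bool.not_true, ← Bool.compl_singleton, preimage_compl, preimage_compl,
      prob_compl_eq_one_sub (hZ₁ (measurableSet_singleton true)),
      prob_compl_eq_one_sub (hZ₂ (measurableSet_singleton true))]
    exact congrArg (1 - ·) hZeq
  exact map_prodMk_eq_of_indepFun μ₁ μ₂
    (F := fun z v => truncByDeath (if z then v.1 else v.2.1) (if z then v.2.2.1 else v.2.2.2))
    hZ₁ hZ₂ hV₁ hV₂
    (fun z => by
      cases z
      exacts [measurable_snd.fst.truncByDeath measurable_snd.snd.snd,
        measurable_fst.truncByDeath measurable_snd.snd.fst])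
    hindep₁ hindep₂ (Bool.forall_bool.2 ⟨hZF, hZeq⟩) (Bool.forall_bool.2 ⟨armC, armT⟩)

/-- The observed-data distribution depends on the joint distribution of the potential
outcomes only through the four principal-strata probabilities and the within-stratum
marginal distributions of `Y_T` and `Y_C`: if two randomized experiments with the same
treatment-assignment probability agree on all of these, then the distributions of the
observed data `(Z, S^obs, Y^obs·1{S^obs = L})` coincide. -/
theorem observed_data_dist_determined_by_strata_and_marginals
    {Ω₁ Ω₂ : Type*} [MeasurableSpace Ω₁] [MeasurableSpace Ω₂]
    (μ₁ : Measure Ω₁) (μ₂ : Measure Ω₂)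
    [IsProbabilityMeasure μ₁] [IsProbabilityMeasure μ₂]
    (Z₁ ST₁ SC₁ : Ω₁ → Bool) (YT₁ YC₁ : Ω₁ → ℝ)
    (Z₂ ST₂ SC₂ : Ω₂ → Bool) (YT₂ YC₂ : Ω₂ → ℝ)
    (hZ₁ : Measurable Z₁) (hST₁ : Measurable ST₁) (hSC₁ : Measurable SC₁)
    (hYT₁ : Measurable YT₁) (hYC₁ : Measurable YC₁)
    (hZ₂ : Measurable Z₂) (hST₂ : Measurable ST₂) (hSC₂ : Measurable SC₂)
    (hYT₂ : Measurable YT₂) (hYC₂ : Measurable YC₂)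
    (hindep₁ : IndepFun Z₁ (fun ω => (ST₁ ω, SC₁ ω, YT₁ ω, YC₁ ω)) μ₁)
    (hindep₂ : IndepFun Z₂ (fun ω => (ST₂ ω, SC₂ ω, YT₂ ω, YC₂ ω)) μ₂)
    (hZeq : μ₁ {ω | Z₁ ω = true} = μ₂ {ω | Z₂ ω = true})
    (hLL : μ₁ {ω | ST₁ ω = true ∧ SC₁ ω = true} = μ₂ {ω | ST₂ ω = true ∧ SC₂ ω = true})
    (hLD : μ₁ {ω | ST₁ ω = true ∧ SC₁ ω = false} = μ₂ {ω | ST₂ ω = true ∧ SC₂ ω = false})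
    (hDL : μ₁ {ω | ST₁ ω = false ∧ SC₁ ω = true} = μ₂ {ω | ST₂ ω = false ∧ SC₂ ω = true})
    (hDD : μ₁ {ω | ST₁ ω = false ∧ SC₁ ω = false} = μ₂ {ω | ST₂ ω = false ∧ SC₂ ω = false})
    (hYT_LL : Measure.map YT₁ (μ₁[|{ω | ST₁ ω = true ∧ SC₁ ω = true}]) =
      Measure.map YT₂ (μ₂[|{ω | ST₂ ω = true ∧ SC₂ ω = true}]))
    (hYT_LD : Measure.map YT₁ (μ₁[|{ω | ST₁ ω = true ∧ SC₁ ω = false}]) =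
      Measure.map YT₂ (μ₂[|{ω | ST₂ ω = true ∧ SC₂ ω = false}]))
    (hYT_DL : Measure.map YT₁ (μ₁[|{ω | ST₁ ω = false ∧ SC₁ ω = true}]) =
      Measure.map YT₂ (μ₂[|{ω | ST₂ ω = false ∧ SC₂ ω = true}]))
    (hYT_DD : Measure.map YT₁ (μ₁[|{ω | ST₁ ω = false ∧ SC₁ ω = false}]) =
      Measure.map YT₂ (μ₂[|{ω | ST₂ ω = false ∧ SC₂ ω = false}]))
    (hYC_LL : Measure.map YC₁ (μ₁[|{ω | ST₁ ω = true ∧ SC₁ ω = true}]) =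
      Measure.map YC₂ (μ₂[|{ω | ST₂ ω = true ∧ SC₂ ω = true}]))
    (hYC_LD : Measure.map YC₁ (μ₁[|{ω | ST₁ ω = true ∧ SC₁ ω = false}]) =
      Measure.map YC₂ (μ₂[|{ω | ST₂ ω = true ∧ SC₂ ω = false}]))
    (hYC_DL : Measure.map YC₁ (μ₁[|{ω | ST₁ ω = false ∧ SC₁ ω = true}]) =
      Measure.map YC₂ (μ₂[|{ω | ST₂ ω = false ∧ SC₂ ω = true}]))
    (hYC_DD : Measure.map YC₁ (μ₁[|{ω | ST₁ ω = false ∧ SC₁ ω = false}]) =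
      Measure.map YC₂ (μ₂[|{ω | ST₂ ω = false ∧ SC₂ ω = false}])) :
    Measure.map (fun ω =>
        (Z₁ ω, (if Z₁ ω then ST₁ ω else SC₁ ω),
          if (if Z₁ ω then ST₁ ω else SC₁ ω) then (if Z₁ ω then YT₁ ω else YC₁ ω) else 0)) μ₁
      = Measure.map (fun ω =>
        (Z₂ ω, (if Z₂ ω then ST₂ ω else SC₂ ω),
          if (if Z₂ ω then ST₂ ω else SC₂ ω) then (if Z₂ ω then YT₂ ω else YC₂ ω) else 0)) μ₂ :=
  observed_data_dist_determined_by_strata_and_marginals_general μ₁ μ₂ Z₁ ST₁ SC₁ YT₁ YC₁ Z₂ ST₂ SC₂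
    YT₂ YC₂ hZ₁ hST₁ hSC₁ hYT₁ hYC₁ hZ₂ hST₂ hSC₂ hYT₂ hYC₂ hindep₁ hindep₂ hZeq hLL hLD hDL hDD
    hYT_LL hYT_LD hYC_LL hYC_DL
end
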